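/- arXiv:1709.04809 — 2 statements merged into one kernel-verified Lean document; each statement's English description precedes it below -/
import Mathlib

section
/- The clause F2 is satisfiable together with the CHC encoding of programs P1 and P2; semantically: for all integers a, b, x, y, x1, y1, x2, y2, if s11(a,b,x,y,x1,y1) and s21(a,b,x,y,x2,y2) both hold, then it is not the case that x2 ≤ x1 - 1, i.e., x2 ≥ x1. -/
/-- CHC encoding of the loop of program P1. -/
inductive s12 : ℤ → ℤ → ℤ → ℤ → ℤ → ℤ → ℤ → ℤ → Prop
  | base (a b x y : ℤ) (h : a ≥ b) : s12 a b x y a b x y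
  | step (a b x y a2 b2 x2 y2 : ℤ) (h : a ≤ b - 1)
      (ih : s12 (a + 1) b (x + a) (y + x + a) a2 b2 x2 y2) :
      s12 a b x y a2 b2 x2 y2

/-- CHC encoding of the loop of program P2. -/
inductive s23 : ℤ → ℤ → ℤ → ℤ → ℤ → ℤ → ℤ → ℤ → Prop
  | base (a b x y : ℤ) (h : a ≥ b - 1) : s23 a b x y (a + 1) b x (y + x)
  | step (a b x y a2 b2 x2 y2 : ℤ) (h : a ≤ b - 2)
      (ih : s23 (a + 1) b (x + a + 1) (y + x) a2 b2 x2 y2) :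
      s23 a b x y a2 b2 x2 y2

/-- CHC encoding of the body of program P2. -/
def s22 (a b x y a2 b2 x2 y2 : ℤ) : Prop :=
  (a ≥ b ∧ a2 = a ∧ b2 = b ∧ x2 = x ∧ y2 = y) ∨
  (a ≤ b - 1 ∧ s23 a b (x + a) y a2 b2 x2 y2)

/-- Input/output relation of program P1. -/
def s11 (a b x y x2 y2 : ℤ) : Prop := ∃ a2 b2, s12 a b x y a2 b2 x2 y2

/-- Input/output relation of program P2. -/
def s21 (a b x y x2 y2 : ℤ) : Prop := ∃ a2 b2, s22 a b x y a2 b2 x2 y2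

/-! Both programs leave `x + ∑ i ∈ [a, b), i` in `x`: P2 merely peels the first summand `a` off
before its loop, which then adds `a + 1, …, b - 1`. -/

theorem Finset.sum_Ico_eq_add_sum_Ico_add_one {α M : Type*} [LinearOrder α] [One α]
    [LocallyFiniteOrder α] [Add α] [SuccAddOrder α] [AddCommMonoid M]
    {a b : α} (hab : a < b) (f : α → M) :
    ∑ i ∈ Finset.Ico a b, f i = f a + ∑ i ∈ Finset.Ico (a + 1) b, f i := by
  rw [Finset.Ico_eq_cons_Ioo hab, Finset.sum_cons, Finset.Ico_add_one_left_eq_Ioo]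

theorem s12.x2_eq {a b x y a2 b2 x2 y2 : ℤ} (h : s12 a b x y a2 b2 x2 y2) :
    x2 = x + ∑ i ∈ Finset.Ico a b, i := by
  induction h with
  | base a b x y hab => simp [Finset.Ico_eq_empty_of_le hab]
  | step a b x y a2 b2 x2 y2 hab _ ih =>
    rw [ih, Finset.sum_Ico_eq_add_sum_Ico_add_one (by omega : a < b)]
    ring

theorem s23.x2_eq {a b x y a2 b2 x2 y2 : ℤ} (h : s23 a b x y a2 b2 x2 y2) :
    x2 = x + ∑ i ∈ Finset.Ico (a + 1) b, i := by
  induction h with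
  | base a b x y hab => simp [Finset.Ico_eq_empty_of_le (by omega : b ≤ a + 1)]
  | step a b x y a2 b2 x2 y2 hab _ ih =>
    rw [ih, Finset.sum_Ico_eq_add_sum_Ico_add_one (by omega : a + 1 < b)]
    ring

theorem s22.x2_eq {a b x y a2 b2 x2 y2 : ℤ} (h : s22 a b x y a2 b2 x2 y2) :
    x2 = x + ∑ i ∈ Finset.Ico a b, i := by
  rcases h with ⟨hab, -, -, rfl, -⟩ | ⟨hab, h⟩
  · simp [Finset.Ico_eq_empty_of_le hab]
  · rw [h.x2_eq, Finset.sum_Ico_eq_add_sum_Ico_add_one (by omega : a < b)]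
    ring

theorem s11.x2_eq {a b x y x2 y2 : ℤ} (h : s11 a b x y x2 y2) :
    x2 = x + ∑ i ∈ Finset.Ico a b, i :=
  let ⟨_, _, h⟩ := h; h.x2_eq

theorem s21.x2_eq {a b x y x2 y2 : ℤ} (h : s21 a b x y x2 y2) :
    x2 = x + ∑ i ∈ Finset.Ico a b, i :=
  let ⟨_, _, h⟩ := h; h.x2_eq

/-- Clause F2 is satisfiable together with the CHC encoding of P1 and P2. -/
theorem F2_satisfiable (a b x y x1 y1 x2 y2 : ℤ)
    (h1 : s11 a b x y x1 y1) (h2 : s21 a b x y x2 y2) : ¬ (x2 ≤ x1 - 1) := by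
  have hx : x2 = x1 := by rw [h2.x2_eq, h1.x2_eq]
  omega
end

section
/- The paired predicate pp2 introduced by Predicate Pairing with abstraction denotes the empty relation; semantically: for all integers a, b, c, d, e, f, g, h, k, m, n, o, p, if a ≤ b - 1, k = a + c, s12(a,b,c,d,e,f,g,h) and s23(a,b,k,d,m,n,o,p) all hold, then g ≥ o (equivalently, the constraint g ≤ o - 1 together with these hypotheses is unsatisfiable). -/
/-!
P1 adds `a, a + 1, …, b - 1` to `x`. P2 adds `a` before entering its loop and `a + 1, …, b - 1`
inside it, so both programs end with the same value of `x`.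
-/

open Finset

theorem s12.x2_eq_add_sum_Ico {a b x y a2 b2 x2 y2 : ℤ} (h : s12 a b x y a2 b2 x2 y2) :
    x2 = x + ∑ i ∈ Ico a b, i := by
  induction h with
  | base a b x y hab => simp [Ico_eq_empty_of_le hab]
  | step a b x y a2 b2 x2 y2 hab _ ih =>
    rw [ih, Ico_add_one_left_eq_Ioo, ← add_sum_Ioo_eq_sum_Ico (by omega : a < b)]
    ring

theorem s23.x2_eq_add_sum_Ioo {a b x y a2 b2 x2 y2 : ℤ} (h : s23 a b x y a2 b2 x2 y2) :
    x2 = x + ∑ i ∈ Ioo a b, i := by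
  induction h with
  | base a b x y hab =>
    rw [← Ico_add_one_left_eq_Ioo, Ico_eq_empty_of_le (by omega : b ≤ a + 1), sum_empty, add_zero]
  | step a b x y a2 b2 x2 y2 hab _ ih =>
    rw [ih, ← Ico_add_one_left_eq_Ioo a b, ← add_sum_Ioo_eq_sum_Ico (by omega : a + 1 < b)]
    ring

/-- The paired predicate pp2 denotes the empty relation. -/
theorem pp2_empty (a b c d e f g h k m n o p : ℤ)
    (hab : a ≤ b - 1) (hk : k = a + c)
    (h1 : s12 a b c d e f g h) (h2 : s23 a b k d m n o p) : g ≥ o := by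
  have hg := h1.x2_eq_add_sum_Ico
  have ho := h2.x2_eq_add_sum_Ioo
  rw [← add_sum_Ioo_eq_sum_Ico (by omega)] at hg
  omega
end
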